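/- Let (S, ⊕, ⊙, 𝟘, 𝟙) be a commutative semiring. For every word w = [a_1]⋯[a_p] with p ≥ 1 and every d-dimensional S-valued time series x of length T, the non-strict running iterated sum satisfies Itsum^{S,≤}_w(x) = CS^S_0( x^{⊙[a_p]} ⊙ CS^S_0( x^{⊙[a_{p−1}]} ⊙ CS^S_0( ⋯ x^{⊙[a_2]} ⊙ CS^S_0( x^{⊙[a_1]} ) ⋯ ) ) ), where x^{⊙[a]} denotes the S-valued series t ↦ x_t^{⊙[a]} and ⊙ between two series is the entrywise product. -/
import Mathlib


/-- The `⊙`-monomial `x_t^{⊙[a]} = ⨀_j (x_t^{(j)})^{⊙ a_j}` in a commutative semiring. -/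
def monoS {S : Type*} [CommSemiring S] {d : ℕ} (x : ℕ → Fin d → S) (t : ℕ)
    (a : Fin d → ℕ) : S :=
  ∏ j, (x t j) ^ (a j)

/-- The non-strict running iterated sum over a commutative semiring,
`Itsum^{S,≤}_w(x)_t = ⨁_{s ≤ t_1 ≤ ⋯ ≤ t_p ≤ t} x_{t_1}^{⊙[a_1]} ⊙ ⋯ ⊙ x_{t_p}^{⊙[a_p]}`
(with starting point `s`; the paper's `Itsum^{S,≤}_w(x)_t` is `issLeS x w 1 t`). -/
def issLeS {S : Type*} [CommSemiring S] {d : ℕ} (x : ℕ → Fin d → S) :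
    List (Fin d → ℕ) → ℕ → ℕ → S
  | [], _, _ => 1
  | a :: w, s, t => ∑ i ∈ Finset.Icc s t, monoS x i a * issLeS x w i t

/-- The shifted cumulative sum `CS^S_r(z)_s`, equal to `𝟘` for `s ≤ r` and to
`⨁_{j=1}^{s−r} z_j` for `s > r`. -/
def csS {S : Type*} [CommSemiring S] (r : ℕ) (z : ℕ → S) : ℕ → S :=
  fun s => ∑ j ∈ Finset.Icc 1 (s - r), z j

/-- The nested expression `x^{⊙[a_p]} ⊙ CS^S_0( x^{⊙[a_{p−1}]} ⊙ ⋯ ⊙ CS^S_0(x^{⊙[a_1]}) ⋯)`,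
where the input list is given in reversed order `[a_p, a_{p−1}, …, a_1]`. -/
def nestS0 {S : Type*} [CommSemiring S] {d : ℕ} (x : ℕ → Fin d → S) :
    List (Fin d → ℕ) → ℕ → S
  | [] => fun _ => 1
  | [a] => fun t => monoS x t a
  | a :: b :: w => fun t => monoS x t a * csS 0 (nestS0 x (b :: w)) t

lemma nestS0_cons {S : Type*} [CommSemiring S] {d : ℕ} (x : ℕ → Fin d → S)
    (a : Fin d → ℕ) (l : List (Fin d → ℕ)) (hl : l ≠ []) (t : ℕ) :
    nestS0 x (a :: l) t = monoS x t a * csS 0 (nestS0 x l) t := by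
  cases l with
  | nil => exact absurd rfl hl
  | cons b w => rfl

lemma issLeS_append {S : Type*} [CommSemiring S] {d : ℕ} (x : ℕ → Fin d → S)
    (a : Fin d → ℕ) :
    ∀ (w : List (Fin d → ℕ)) (s t : ℕ),
      issLeS x (w ++ [a]) s t = ∑ i ∈ Finset.Icc s t, issLeS x w s i * monoS x i a := by
  intro w
  induction w with
  | nil => intro s t; simp [issLeS, mul_comm]
  | cons b w ih =>
    intro s t
    calc (∑ i ∈ Finset.Icc s t, monoS x i b * issLeS x (w ++ [a]) i t)
        = ∑ i ∈ Finset.Icc s t, ∑ j ∈ Finset.Icc i t,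
            monoS x i b * (issLeS x w i j * monoS x j a) := by
          simp only [ih, Finset.mul_sum]
      _ = ∑ j ∈ Finset.Icc s t, ∑ i ∈ Finset.Icc s j,
            monoS x i b * (issLeS x w i j * monoS x j a) :=
          Finset.sum_comm' (by intro i j; simp only [Finset.mem_Icc]; omega)
      _ = _ := by
          simp only [issLeS, Finset.sum_mul]
          exact Finset.sum_congr rfl fun j _ => Finset.sum_congr rfl fun i _ => by ring

/-- Dynamic-programming formula for the non-strict iterated sum over a commutative
semiring: for a word `w = [a_1]⋯[a_p]`, `p ≥ 1`, and an `S`-valued time series of length `T`,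
`Itsum^{S,≤}_w(x) = CS^S_0( x^{⊙[a_p]} ⊙ CS^S_0( x^{⊙[a_{p−1}]} ⊙ ⋯ ⊙ CS^S_0(x^{⊙[a_1]}) ⋯ ))`. -/
theorem issLeS_eq_nested_cs {S : Type*} [CommSemiring S] {d T : ℕ} (x : ℕ → Fin d → S)
    (w : List (Fin d → ℕ)) (hw : w ≠ [])
    (hletters : ∀ a ∈ w, ∃ j, a j ≠ 0)
    (t : ℕ) (ht1 : 1 ≤ t) (htT : t ≤ T) :
    issLeS x w 1 t = csS 0 (nestS0 x w.reverse) t := by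
  clear hletters ht1 htT
  induction w using List.reverseRecOn generalizing t with
  | nil => exact absurd rfl hw
  | append_singleton w a ih =>
    rw [issLeS_append, List.reverse_append, List.reverse_singleton, List.singleton_append]
    cases w with
    | nil => simp [issLeS, csS, nestS0]
    | cons b w' =>
      have hne : (b :: w').reverse ≠ [] := by simp
      unfold csS
      rw [Nat.sub_zero]
      refine Finset.sum_congr rfl fun j _ => ?_
      rw [nestS0_cons x a _ hne j, ih (by simp) j, mul_comm]
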